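/- Let V be a complex Banach space, A : V → V a continuous linear operator, T(t) = exp(t·A) the associated operator group, and P : V → V a continuous linear operator with P∘P = P and A∘P = P∘A. Define G(t,s) = T(t−s)∘P for t ≥ s and G(t,s) = −T(t−s)∘(I−P) for t < s, and assume there are constants c, α > 0 with ‖G(t,s)‖ ≤ c·e^{−α|t−s|} (operator norm) for all t, s ∈ ℝ. If f : ℝ → V is bounded, continuous and almost automorphic, then y(t) = ∫_ℝ G(t,s)(f(s)) ds is the unique bounded differentiable solution of y'(t) = A(y(t)) + f(t) on ℝ, y is almost automorphic, and sup_{t∈ℝ} ‖y(t)‖ ≤ (2c/α)·sup_{t∈ℝ} ‖f(t)‖. -/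

import Mathlib

open MeasureTheory Filter Topology

/-- A continuous function `ψ : ℝ → V` into a Banach space is almost automorphic if for every
sequence of reals there is a subsequence `(τₙ)` and a function `ψ̃` with
`ψ(t+τₙ) → ψ̃(t)` and `ψ̃(t−τₙ) → ψ(t)` pointwise on `ℝ`. -/
def AlmostAutomorphic {V : Type*} [NormedAddCommGroup V] (ψ : ℝ → V) : Prop :=
  Continuous ψ ∧ ∀ σ : ℕ → ℝ, ∃ k : ℕ → ℕ, StrictMono k ∧ ∃ ψt : ℝ → V,
    (∀ t : ℝ, Tendsto (fun n => ψ (t + σ (k n))) atTop (𝓝 (ψt t))) ∧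
    (∀ t : ℝ, Tendsto (fun n => ψt (t - σ (k n))) atTop (𝓝 (ψ t)))

/-- The Green function associated with a bounded operator `A`, its group
`T(t) = exp(t A)` and a projection `P`. -/
noncomputable def GreenOp {V : Type*} [NormedAddCommGroup V] [NormedSpace ℂ V]
    (A P : V →L[ℂ] V) (t s : ℝ) : V →L[ℂ] V :=
  if s ≤ t then (NormedSpace.exp ((t - s) • A)).comp P
  else -((NormedSpace.exp ((t - s) • A)).comp (1 - P))

/-!
Write `T(t) = exp (t • A)` and `y(t) = ∫ G(t,s) f(s) ds` for the Green integral. Since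
`‖G(t,s)‖ ≤ c e^{-α|t-s|}` and `∫ e^{-α|t-s|} ds = 2/α`, the integral converges absolutely and
`‖y(t)‖ ≤ (2c/α) sup ‖f‖`. Factoring `G(t,s) = T(t) T(-s) P` for `s ≤ t` and
`G(t,s) = -T(t) T(-s) (1 - P)` for `s > t` gives
`y(t) = T(t) (∫_{-∞}^t T(-s) P f(s) ds - ∫_t^∞ T(-s) (1 - P) f(s) ds)`,
which the product rule and the fundamental theorem of calculus differentiate to `A y(t) + f(t)`.

A solution of `w' = A w` satisfies `w(s) = T(s - t) w(t)`, so `G(t,s) w(s)` equals `P w(t)` for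
`s ≤ t` and `P w(t) - w(t)` for `s > t`. If `w` is bounded, letting `s → ∓∞` in the dichotomy
estimate kills both parts of `w(t)`; applied to the difference of two bounded solutions this is
uniqueness. Finally `y(· + τ)` is the Green integral of `f(· + τ)`, so the almost automorphy of `f`
passes to `y` by dominated convergence.
-/

open Set

theorem HasDerivAt.complex_clm_apply {E F : Type*} [NormedAddCommGroup E] [NormedSpace ℂ E]
    [NormedAddCommGroup F] [NormedSpace ℂ F] {T : ℝ → E →L[ℂ] F} {T' : E →L[ℂ] F}
    {u : ℝ → E} {u' : E} {t : ℝ} (hT : HasDerivAt T T' t) (hu : HasDerivAt u u' t) :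
    HasDerivAt (fun x => T x (u x)) (T' (u t) + T t u') t := by
  have hTℝ := (ContinuousLinearMap.restrictScalarsL ℂ E F ℝ ℝ).hasFDerivAt.comp_hasDerivAt t hT
  simpa using hTℝ.clm_apply hu

section RealExp

variable {𝔸 : Type*} [NormedRing 𝔸] [NormedAlgebra ℝ 𝔸] [CompleteSpace 𝔸]

theorem NormedSpace.exp_add_smul (x : 𝔸) (a b : ℝ) :
    NormedSpace.exp ((a + b) • x) = NormedSpace.exp (a • x) * NormedSpace.exp (b • x) := by
  let +nondep : NormedAlgebra ℚ 𝔸 := .restrictScalars ℚ ℝ 𝔸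
  rw [add_smul]
  exact NormedSpace.exp_add_of_commute ((Commute.refl x).smul_left a |>.smul_right b)

theorem continuous_exp_smul (x : 𝔸) : Continuous fun t : ℝ => NormedSpace.exp (t • x) :=
  (differentiable_exp_smul_const ℝ x).continuous

end RealExp

section HalfLineIntegrals

variable {E : Type*} [NormedAddCommGroup E] [NormedSpace ℝ E] [CompleteSpace E] {h : ℝ → E}

theorem hasDerivAt_integral_Iic (hc : Continuous h) (hi : ∀ u, IntegrableOn h (Iic u)) (t : ℝ) :
    HasDerivAt (fun u => ∫ s in Iic u, h s) (h t) t := by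
  have hsplit : (fun u => ∫ s in Iic u, h s) =
      fun u => (∫ s in Iic t, h s) + ∫ s in t..u, h s := by
    funext u
    rw [← intervalIntegral.integral_Iic_sub_Iic (hi t) (hi u), add_sub_cancel]
  rw [hsplit]
  exact (intervalIntegral.integral_hasDerivAt_right (hc.intervalIntegrable t t)
    hc.stronglyMeasurable.stronglyMeasurableAtFilter hc.continuousAt).const_add _

theorem hasDerivAt_integral_Ioi (hc : Continuous h) (hi : ∀ u, IntegrableOn h (Ioi u)) (t : ℝ) :
    HasDerivAt (fun u => ∫ s in Ioi u, h s) (-h t) t := by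
  have hsplit : (fun u => ∫ s in Ioi u, h s) =
      fun u => (∫ s in Ioi t, h s) - ∫ s in t..u, h s := by
    funext u
    rw [← intervalIntegral.integral_Ioi_sub_Ioi' (hi t) (hi u), sub_sub_cancel]
  rw [hsplit]
  exact (intervalIntegral.integral_hasDerivAt_right (hc.intervalIntegrable t t)
    hc.stronglyMeasurable.stronglyMeasurableAtFilter hc.continuousAt).const_sub _

end HalfLineIntegrals

theorem integral_exp_neg_mul_abs_sub {α : ℝ} (hα : 0 < α) (t : ℝ) :
    ∫ s : ℝ, Real.exp (-α * |t - s|) = 2 / α := by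
  rw [integral_sub_left_eq_self (fun s => Real.exp (-α * |s|)),
    integral_comp_abs (f := fun s => Real.exp (-α * s)), integral_exp_mul_Ioi (by linarith)]
  field_simp
  simp

-- A function whose integral is nonzero is integrable (the integral of anything else is `0`).
theorem integrable_exp_neg_mul_abs_sub {α : ℝ} (hα : 0 < α) (t : ℝ) :
    Integrable fun s : ℝ => Real.exp (-α * |t - s|) :=
  Integrable.of_integral_ne_zero <| by
    rw [integral_exp_neg_mul_abs_sub hα]
    positivity

theorem eq_zero_of_norm_le_mul_exp_neg {E : Type*} [NormedAddCommGroup E] {x : E} {K α : ℝ}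
    (hα : 0 < α) (h : ∀ r > 0, ‖x‖ ≤ K * Real.exp (-α * r)) : x = 0 := by
  have hlim : Tendsto (fun r => K * Real.exp (-α * r)) atTop (𝓝 0) := by
    simpa using (Real.tendsto_exp_atBot.comp
      (tendsto_id.const_mul_atTop_of_neg (neg_neg_iff_pos.mpr hα))).const_mul K
  exact norm_le_zero_iff.mp <| ge_of_tendsto hlim <| (eventually_gt_atTop 0).mono h

section Green

variable {V : Type*} [NormedAddCommGroup V] [NormedSpace ℂ V]

def HasExpDichotomy (A P : V →L[ℂ] V) (c α : ℝ) : Prop :=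
  ∀ t s : ℝ, ‖GreenOp A P t s‖ ≤ c * Real.exp (-α * |t - s|)

noncomputable def greenIntegral (A P : V →L[ℂ] V) (g : ℝ → V) (t : ℝ) : V :=
  ∫ s : ℝ, GreenOp A P t s (g s)

theorem greenOp_add_add (A P : V →L[ℂ] V) (t s τ : ℝ) :
    GreenOp A P (t + τ) (s + τ) = GreenOp A P t s := by
  simp only [GreenOp, add_sub_add_right_eq_sub, add_le_add_iff_right]

theorem greenIntegral_comp_add_right (A P : V →L[ℂ] V) (g : ℝ → V) (t τ : ℝ) :
    greenIntegral A P (fun s => g (s + τ)) t = greenIntegral A P g (t + τ) := by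
  rw [greenIntegral, greenIntegral,
    ← integral_add_right_eq_self (fun s => GreenOp A P (t + τ) s (g s)) τ]
  simp only [greenOp_add_add]

namespace HasExpDichotomy

variable {A P : V →L[ℂ] V} {c α : ℝ}

theorem norm_apply_le (hd : HasExpDichotomy A P c α) {x : V} {M : ℝ} (hx : ‖x‖ ≤ M)
    (t s : ℝ) : ‖GreenOp A P t s x‖ ≤ c * M * Real.exp (-α * |t - s|) :=
  calc _ ≤ c * Real.exp (-α * |t - s|) * ‖x‖ := (GreenOp A P t s).le_of_opNorm_le (hd t s) x
    _ ≤ c * Real.exp (-α * |t - s|) * M :=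
      mul_le_mul_of_nonneg_left hx ((norm_nonneg _).trans (hd t s))
    _ = c * M * Real.exp (-α * |t - s|) := by ring

theorem norm_greenIntegral_le (hd : HasExpDichotomy A P c α) (hα : 0 < α) {g : ℝ → V} {M : ℝ}
    (hM : ∀ s, ‖g s‖ ≤ M) (t : ℝ) : ‖greenIntegral A P g t‖ ≤ 2 * c / α * M := by
  have h := norm_integral_le_of_norm_le
    ((integrable_exp_neg_mul_abs_sub hα t).const_mul (c * M))
    (ae_of_all _ fun s => hd.norm_apply_le (hM s) t s)
  rw [integral_const_mul, integral_exp_neg_mul_abs_sub hα] at h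
  calc _ ≤ c * M * (2 / α) := h
    _ = 2 * c / α * M := by ring

end HasExpDichotomy

variable [CompleteSpace V]

theorem exp_smul_apply_exp_smul_apply (A : V →L[ℂ] V) (a b : ℝ) (x : V) :
    NormedSpace.exp (a • A) (NormedSpace.exp (b • A) x) = NormedSpace.exp ((a + b) • A) x :=
  (DFunLike.congr_fun (NormedSpace.exp_add_smul A a b) x).symm

theorem exp_neg_smul_apply_exp_smul_apply (A : V →L[ℂ] V) (a : ℝ) (x : V) :
    NormedSpace.exp ((-a) • A) (NormedSpace.exp (a • A) x) = x := by
  rw [exp_smul_apply_exp_smul_apply, neg_add_cancel, zero_smul, NormedSpace.exp_zero]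
  rfl

theorem hasDerivAt_exp_smul_apply (A : V →L[ℂ] V) (x : V) (t : ℝ) :
    HasDerivAt (fun t : ℝ => NormedSpace.exp (t • A) x) (A (NormedSpace.exp (t • A) x)) t := by
  simpa using (hasDerivAt_exp_smul_const' (𝕂 := ℝ) A t).complex_clm_apply (hasDerivAt_const t x)

theorem eq_exp_smul_apply_of_hasDerivAt (A : V →L[ℂ] V) {w : ℝ → V}
    (hw : ∀ t, HasDerivAt w (A (w t)) t) :
    w = fun t => NormedSpace.exp (t • A) (w 0) :=
  ODE_solution_unique_univ (v := fun _ => A) (s := fun _ => univ) (t₀ := 0)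
    (fun _ => (A.restrictScalars ℝ).lipschitz.lipschitzOnWith)
    (fun t => ⟨hw t, trivial⟩) (fun t => ⟨hasDerivAt_exp_smul_apply A (w 0) t, trivial⟩)
    (by simp)

theorem exp_smul_apply_of_hasDerivAt (A : V →L[ℂ] V) {w : ℝ → V}
    (hw : ∀ t, HasDerivAt w (A (w t)) t) (t s : ℝ) :
    w t = NormedSpace.exp ((t - s) • A) (w s) := by
  rw [eq_exp_smul_apply_of_hasDerivAt A hw]
  simp only [exp_smul_apply_exp_smul_apply, sub_add_cancel]

theorem greenOp_apply_exp_smul {A P : V →L[ℂ] V} (hAP : A.comp P = P.comp A) (t s : ℝ) (y : V) :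
    GreenOp A P t s (NormedSpace.exp ((s - t) • A) y) = if s ≤ t then P y else P y - y := by
  have hcomm : Commute P (NormedSpace.exp ((s - t) • A)) :=
    (Commute.smul_left (hAP : Commute A P) (s - t)).exp_left.symm
  have hPy : P (NormedSpace.exp ((s - t) • A) y) = NormedSpace.exp ((s - t) • A) (P y) :=
    DFunLike.congr_fun hcomm.eq y
  unfold GreenOp
  split_ifs <;> simp [hPy, exp_smul_apply_exp_smul_apply]

theorem greenOp_apply_of_le (A P : V →L[ℂ] V) {t s : ℝ} (h : s ≤ t) (x : V) :
    GreenOp A P t s x = NormedSpace.exp (t • A) (NormedSpace.exp ((-s) • A) (P x)) := by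
  rw [exp_smul_apply_exp_smul_apply, ← sub_eq_add_neg, GreenOp, if_pos h]
  rfl

theorem greenOp_apply_of_lt (A P : V →L[ℂ] V) {t s : ℝ} (h : t < s) (x : V) :
    GreenOp A P t s x = -NormedSpace.exp (t • A) (NormedSpace.exp ((-s) • A) ((1 - P) x)) := by
  rw [exp_smul_apply_exp_smul_apply, ← sub_eq_add_neg, GreenOp, if_neg (not_le.mpr h)]
  rfl

theorem stronglyMeasurable_greenOp (A P : V →L[ℂ] V) (t : ℝ) :
    StronglyMeasurable (GreenOp A P t) := by
  have hexp : Continuous fun s : ℝ => NormedSpace.exp ((t - s) • A) :=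
    (continuous_exp_smul A).comp (by fun_prop)
  exact (hexp.clm_comp continuous_const).stronglyMeasurable.ite measurableSet_Iic
    (hexp.clm_comp continuous_const).neg.stronglyMeasurable

theorem integrableOn_Iic_exp_neg_smul_apply {A P : V →L[ℂ] V} {g : ℝ → V} {u : ℝ}
    (hi : Integrable fun s => GreenOp A P u s (g s)) :
    IntegrableOn (fun s => NormedSpace.exp ((-s) • A) (P (g s))) (Iic u) := by
  refine ((NormedSpace.exp ((-u) • A)).integrable_comp hi).integrableOn.congr_fun
    (fun s hs => ?_) measurableSet_Iic
  dsimp only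
  rw [greenOp_apply_of_le A P (mem_Iic.mp hs), exp_neg_smul_apply_exp_smul_apply]

theorem integrableOn_Ioi_exp_neg_smul_apply {A P : V →L[ℂ] V} {g : ℝ → V} {u : ℝ}
    (hi : Integrable fun s => GreenOp A P u s (g s)) :
    IntegrableOn (fun s => NormedSpace.exp ((-s) • A) ((1 - P) (g s))) (Ioi u) := by
  refine ((NormedSpace.exp ((-u) • A)).integrable_comp hi).neg.integrableOn.congr_fun
    (fun s hs => ?_) measurableSet_Ioi
  rw [Pi.neg_apply, greenOp_apply_of_lt A P (mem_Ioi.mp hs), map_neg, neg_neg,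
    exp_neg_smul_apply_exp_smul_apply]

theorem greenIntegral_eq_exp_smul_apply {A P : V →L[ℂ] V} {g : ℝ → V} {u : ℝ}
    (hi : Integrable fun s => GreenOp A P u s (g s)) :
    greenIntegral A P g u = NormedSpace.exp (u • A)
      ((∫ s in Iic u, NormedSpace.exp ((-s) • A) (P (g s))) -
        ∫ s in Ioi u, NormedSpace.exp ((-s) • A) ((1 - P) (g s))) := by
  rw [greenIntegral,
    ← intervalIntegral.integral_Iic_add_Ioi (b := u) hi.integrableOn hi.integrableOn, map_sub,
    ← ContinuousLinearMap.integral_comp_comm _ (integrableOn_Iic_exp_neg_smul_apply hi),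
    ← ContinuousLinearMap.integral_comp_comm _ (integrableOn_Ioi_exp_neg_smul_apply hi),
    sub_eq_add_neg, ← integral_neg]
  congr 1
  · exact setIntegral_congr_fun measurableSet_Iic fun s hs => greenOp_apply_of_le A P hs _
  · exact setIntegral_congr_fun measurableSet_Ioi fun s hs => greenOp_apply_of_lt A P hs _

namespace HasExpDichotomy

variable {A P : V →L[ℂ] V} {c α : ℝ} (hd : HasExpDichotomy A P c α) (hα : 0 < α)
include hd hα

theorem eq_zero_of_hasDerivAt (hAP : A.comp P = P.comp A) {w : ℝ → V}
    (hw : ∀ t, HasDerivAt w (A (w t)) t) {C : ℝ} (hC : ∀ t, ‖w t‖ ≤ C) : w = 0 := by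
  funext t
  have hbound (s : ℝ) : ‖if s ≤ t then P (w t) else P (w t) - w t‖ ≤
      c * C * Real.exp (-α * |t - s|) := by
    rw [← greenOp_apply_exp_smul hAP, ← exp_smul_apply_of_hasDerivAt A hw]
    exact hd.norm_apply_le (hC s) t s
  have hP : P (w t) = 0 := eq_zero_of_norm_le_mul_exp_neg hα fun r hr => by
    simpa [hr.le, abs_of_pos hr] using hbound (t - r)
  have hQ : P (w t) - w t = 0 := eq_zero_of_norm_le_mul_exp_neg hα fun r hr => by
    simpa [not_le.mpr hr, abs_of_pos hr] using hbound (t + r)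
  simpa [hP] using hQ

theorem integrable_greenOp_apply {g : ℝ → V} (hg : AEStronglyMeasurable g) {M : ℝ}
    (hM : ∀ s, ‖g s‖ ≤ M) (t : ℝ) : Integrable fun s => GreenOp A P t s (g s) :=
  ((integrable_exp_neg_mul_abs_sub hα t).const_mul (c * M)).mono'
    ((ContinuousLinearMap.id ℂ _).aestronglyMeasurable_comp₂
      (stronglyMeasurable_greenOp A P t).aestronglyMeasurable hg)
    (ae_of_all _ fun s => hd.norm_apply_le (hM s) t s)

theorem tendsto_greenIntegral {ι : Type*} {l : Filter ι} [l.IsCountablyGenerated]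
    {g : ι → ℝ → V} {g₀ : ℝ → V} (hg : ∀ n, AEStronglyMeasurable (g n)) {M : ℝ}
    (hM : ∀ n s, ‖g n s‖ ≤ M) (hlim : ∀ s, Tendsto (fun n => g n s) l (𝓝 (g₀ s))) (t : ℝ) :
    Tendsto (fun n => greenIntegral A P (g n) t) l (𝓝 (greenIntegral A P g₀ t)) :=
  tendsto_integral_filter_of_dominated_convergence _
    (Eventually.of_forall fun n => (ContinuousLinearMap.id ℂ _).aestronglyMeasurable_comp₂
      (stronglyMeasurable_greenOp A P t).aestronglyMeasurable (hg n))
    (Eventually.of_forall fun n => ae_of_all _ fun s => hd.norm_apply_le (hM n s) t s)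
    ((integrable_exp_neg_mul_abs_sub hα t).const_mul (c * M))
    (ae_of_all _ fun s => ((GreenOp A P t s).continuous.tendsto _).comp (hlim s))

theorem hasDerivAt_greenIntegral {f : ℝ → V} (hf : Continuous f) {M : ℝ} (hM : ∀ s, ‖f s‖ ≤ M)
    (t : ℝ) : HasDerivAt (greenIntegral A P f) (A (greenIntegral A P f t) + f t) t := by
  have hi (u : ℝ) := hd.integrable_greenOp_apply hα hf.aestronglyMeasurable hM u
  have hcont (Q : V →L[ℂ] V) : Continuous fun s => NormedSpace.exp ((-s) • A) (Q (f s)) :=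
    ((continuous_exp_smul A).comp continuous_neg).clm_apply (Q.continuous.comp hf)
  have hinner : HasDerivAt (fun u => (∫ s in Iic u, NormedSpace.exp ((-s) • A) (P (f s))) -
      ∫ s in Ioi u, NormedSpace.exp ((-s) • A) ((1 - P) (f s)))
      (NormedSpace.exp ((-t) • A) (f t)) t := by
    refine ((hasDerivAt_integral_Iic (hcont P)
      (fun u => integrableOn_Iic_exp_neg_smul_apply (hi u)) t).sub (hasDerivAt_integral_Ioi
        (hcont (1 - P)) (fun u => integrableOn_Ioi_exp_neg_smul_apply (hi u)) t)).congr_deriv ?_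
    rw [sub_neg_eq_add, ← map_add]
    simp
  convert (hasDerivAt_exp_smul_const' (𝕂 := ℝ) A t).complex_clm_apply hinner using 1
  · exact funext fun u => greenIntegral_eq_exp_smul_apply (hi u)
  · rw [mul_apply_eq_comp, ← greenIntegral_eq_exp_smul_apply (hi t)]
    simpa using (exp_neg_smul_apply_exp_smul_apply A (-t) (f t)).symm

theorem eq_greenIntegral_of_hasDerivAt (hAP : A.comp P = P.comp A) {f : ℝ → V}
    (hf : Continuous f) {M : ℝ} (hM : ∀ s, ‖f s‖ ≤ M) {z : ℝ → V}
    (hz : ∀ t, HasDerivAt z (A (z t) + f t) t) {C : ℝ} (hC : ∀ t, ‖z t‖ ≤ C) :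
    z = greenIntegral A P f := by
  refine sub_eq_zero.mp (hd.eq_zero_of_hasDerivAt hα hAP (fun t => ?_) fun t =>
    norm_sub_le_of_le (hC t) (hd.norm_greenIntegral_le hα hM t))
  convert (hz t).sub (hd.hasDerivAt_greenIntegral hα hf hM t) using 1
  simp only [Pi.sub_apply, map_sub]
  abel

theorem almostAutomorphic_greenIntegral {f : ℝ → V} (hf : AlmostAutomorphic f) {M : ℝ}
    (hM : ∀ s, ‖f s‖ ≤ M) : AlmostAutomorphic (greenIntegral A P f) := by
  refine ⟨continuous_iff_continuousAt.2 fun t =>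
    (hd.hasDerivAt_greenIntegral hα hf.1 hM t).continuousAt, fun σ => ?_⟩
  obtain ⟨k, hk, f', hfwd, hback⟩ := hf.2 σ
  have hshift (τ : ℝ) : Continuous fun s => f (s + τ) := hf.1.comp (continuous_add_const τ)
  have hf'meas : StronglyMeasurable f' := stronglyMeasurable_of_tendsto atTop
    (fun n => (hshift (σ (k n))).stronglyMeasurable) (tendsto_pi_nhds.2 hfwd)
  have hf'M (s : ℝ) : ‖f' s‖ ≤ M := le_of_tendsto' (hfwd s).norm fun n => hM _
  refine ⟨k, hk, greenIntegral A P f', fun t => ?_, fun t => ?_⟩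
  · simp_rw [← greenIntegral_comp_add_right]
    exact hd.tendsto_greenIntegral hα (fun n => (hshift _).aestronglyMeasurable)
      (fun n s => hM _) hfwd t
  · simp_rw [sub_eq_add_neg, ← greenIntegral_comp_add_right]
    exact hd.tendsto_greenIntegral hα (g := fun n s => f' (s + -σ (k n)))
      (fun n => (hf'meas.comp_measurable (measurable_add_const _)).aestronglyMeasurable)
      (fun n s => hf'M _) (by simpa only [sub_eq_add_neg] using hback) t

end HasExpDichotomy

end Green

theorem abstract_linear_equation_unique_almost_automorphic_solution
    {V : Type*} [NormedAddCommGroup V] [NormedSpace ℂ V] [CompleteSpace V]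
    (A P : V →L[ℂ] V) (hAP : A.comp P = P.comp A)
    (c α : ℝ) (hα : 0 < α)
    (hdich : ∀ t s : ℝ, ‖GreenOp A P t s‖ ≤ c * Real.exp (-α * |t - s|))
    (f : ℝ → V) (hfc : Continuous f) (hfb : ∃ C, ∀ t, ‖f t‖ ≤ C)
    (hfaa : AlmostAutomorphic f) :
    (∀ t : ℝ, HasDerivAt (fun t => ∫ s : ℝ, GreenOp A P t s (f s))
      (A (∫ s : ℝ, GreenOp A P t s (f s)) + f t) t) ∧
    (∃ C, ∀ t : ℝ, ‖∫ s : ℝ, GreenOp A P t s (f s)‖ ≤ C) ∧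
    (∀ z : ℝ → V, (∀ t : ℝ, HasDerivAt z (A (z t) + f t) t) →
      (∃ C, ∀ t : ℝ, ‖z t‖ ≤ C) → z = fun t => ∫ s : ℝ, GreenOp A P t s (f s)) ∧
    AlmostAutomorphic (fun t => ∫ s : ℝ, GreenOp A P t s (f s)) ∧
    (∀ t : ℝ, ‖∫ s : ℝ, GreenOp A P t s (f s)‖ ≤ (2 * c / α) * ⨆ t : ℝ, ‖f t‖) := by
  obtain ⟨M, hM⟩ := hfb
  have hd : HasExpDichotomy A P c α := hdich
  refine ⟨hd.hasDerivAt_greenIntegral hα hfc hM, ⟨2 * c / α * M, hd.norm_greenIntegral_le hα hM⟩,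
    fun z hz ⟨C, hC⟩ => hd.eq_greenIntegral_of_hasDerivAt hα hAP hfc hM hz hC,
    hd.almostAutomorphic_greenIntegral hα hfaa hM, hd.norm_greenIntegral_le hα fun s => ?_⟩
  exact le_ciSup ⟨M, forall_mem_range.2 hM⟩ s
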